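/- arXiv:1205.0376 — 2 statements merged into one kernel-verified Lean document; each statement's English description precedes it below -/
import Mathlib

section
/- Let X be a set, R an equivalence relation on X, and δ₁, δ₂ discrete probability distributions on X. Then there exists a weighting function w : X × X → [0,1] witnessing δ₁ L(R) δ₂ (i.e., w(x,y) > 0 implies x R y, ∑_y w(x,y) = δ₁(x), and ∑_x w(x,y) = δ₂(y)) if and only if for every equivalence class C of R, δ₁(C) = δ₂(C). -/
/-!
If a weighting is supported on `R`, all the mass leaving an equivalence class stays in it, so
both marginals give the class the same weight. Conversely, when the class weights `S` agree, the
product coupling `w x y = δ₁ x * δ₂ y / S x` inside each class (and `0` across classes) has the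
prescribed marginals.
-/

open Finset

section Coupling

variable {X : Type*} [Fintype X] {R : X → X → Prop} [DecidableRel R]

lemma filter_rel_eq_of_rel (hR : Equivalence R) {x y : X} (h : R x y) :
    univ.filter (R x) = univ.filter (R y) := by
  ext z
  simp only [mem_filter, mem_univ, true_and]
  exact ⟨hR.trans (hR.symm h), hR.trans h⟩

lemma sum_filter_rel_sum_eq (hR : Equivalence R) {w : X → X → ℝ}
    (hw : ∀ x y, w x y ≠ 0 → R x y) (x : X) :
    ∑ y ∈ univ.filter (R x), ∑ z, w y z =
      ∑ y ∈ univ.filter (R x), ∑ z ∈ univ.filter (R x), w y z := by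
  refine sum_congr rfl fun y hy => ?_
  rw [filter_rel_eq_of_rel hR (mem_filter.1 hy).2, sum_filter_of_ne fun z _ => hw y z]

lemma sum_filter_rel_eq_of_support (hR : Equivalence R) {w : X → X → ℝ} {δ₁ δ₂ : X → ℝ}
    (hw : ∀ x y, w x y ≠ 0 → R x y) (hw₁ : ∀ x, ∑ y, w x y = δ₁ x)
    (hw₂ : ∀ y, ∑ x, w x y = δ₂ y) (x : X) :
    ∑ y ∈ univ.filter (R x), δ₁ y = ∑ y ∈ univ.filter (R x), δ₂ y := by
  have hw' : ∀ y z, w z y ≠ 0 → R y z := fun y z h => hR.symm (hw z y h)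
  simp only [← hw₁, ← hw₂]
  rw [sum_filter_rel_sum_eq hR hw, sum_filter_rel_sum_eq (w := fun y z => w z y) hR hw' x,
    sum_comm]

lemma eq_zero_of_sum_filter_rel_eq_zero (hR : Equivalence R) {f : X → ℝ} (hf : ∀ x, 0 ≤ f x)
    {x : X} (h : ∑ y ∈ univ.filter (R x), f y = 0) : f x = 0 :=
  (sum_eq_zero_iff_of_nonneg fun y _ => hf y).1 h x (by simpa using hR.refl x)

variable (R) in
/-- A class of weight zero carries no `δ₁`-mass, so there the junk value `a / 0 = 0` is correct. -/
noncomputable def classCoupling (δ₁ δ₂ : X → ℝ) (x y : X) : ℝ :=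
  if R x y then δ₁ x * δ₂ y / ∑ z ∈ univ.filter (R x), δ₁ z else 0

variable {δ₁ δ₂ : X → ℝ}

lemma rel_of_classCoupling_ne_zero {x y : X} (h : classCoupling R δ₁ δ₂ x y ≠ 0) : R x y := by
  by_contra hxy
  exact h (if_neg hxy)

lemma classCoupling_nonneg (h₁ : ∀ x, 0 ≤ δ₁ x) (h₂ : ∀ x, 0 ≤ δ₂ x) (x y : X) :
    0 ≤ classCoupling R δ₁ δ₂ x y := by
  unfold classCoupling
  split_ifs
  · exact div_nonneg (mul_nonneg (h₁ x) (h₂ y)) (sum_nonneg fun z _ => h₁ z)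
  · exact le_rfl

lemma classCoupling_le_right (hR : Equivalence R) (h₁ : ∀ x, 0 ≤ δ₁ x) (h₂ : ∀ x, 0 ≤ δ₂ x)
    (x y : X) : classCoupling R δ₁ δ₂ x y ≤ δ₂ y := by
  unfold classCoupling
  split_ifs
  · rw [mul_comm, mul_div_assoc]
    refine mul_le_of_le_one_right (h₂ y) (div_le_one_of_le₀ ?_ (sum_nonneg fun z _ => h₁ z))
    exact single_le_sum (fun z _ => h₁ z) (by simpa using hR.refl x)
  · exact h₂ y

lemma sum_classCoupling_right (hR : Equivalence R) (h₁ : ∀ x, 0 ≤ δ₁ x)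
    (hclass : ∀ x, ∑ y ∈ univ.filter (R x), δ₁ y = ∑ y ∈ univ.filter (R x), δ₂ y) (x : X) :
    ∑ y, classCoupling R δ₁ δ₂ x y = δ₁ x := by
  simp only [classCoupling]
  rw [← sum_filter, ← sum_div, ← mul_sum, ← hclass]
  exact mul_div_cancel_of_imp (eq_zero_of_sum_filter_rel_eq_zero hR h₁)

lemma sum_classCoupling_left (hR : Equivalence R) (h₂ : ∀ x, 0 ≤ δ₂ x)
    (hclass : ∀ x, ∑ y ∈ univ.filter (R x), δ₁ y = ∑ y ∈ univ.filter (R x), δ₂ y) (y : X) :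
    ∑ x, classCoupling R δ₁ δ₂ x y = δ₂ y := by
  have hfilter : univ.filter (fun x => R x y) = univ.filter (R y) := by
    ext x
    simp only [mem_filter, mem_univ, true_and]
    exact ⟨hR.symm, hR.symm⟩
  simp only [classCoupling]
  rw [← sum_filter, hfilter]
  calc ∑ x ∈ univ.filter (R y), δ₁ x * δ₂ y / ∑ z ∈ univ.filter (R x), δ₁ z
      = ∑ x ∈ univ.filter (R y), δ₁ x * δ₂ y / ∑ z ∈ univ.filter (R y), δ₁ z :=
        sum_congr rfl fun x hx => by
          rw [filter_rel_eq_of_rel hR (hR.symm (mem_filter.1 hx).2)]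
    _ = δ₂ y * (∑ z ∈ univ.filter (R y), δ₁ z) / ∑ z ∈ univ.filter (R y), δ₁ z := by
        rw [← sum_div, ← sum_mul, mul_comm]
    _ = δ₂ y := mul_div_cancel_of_imp fun h =>
        eq_zero_of_sum_filter_rel_eq_zero hR h₂ (hclass y ▸ h)

end Coupling

theorem lifting_iff_class_probabilities_general {X : Type*} [Fintype X]
    (R : X → X → Prop) [DecidableRel R] (hR : Equivalence R)
    (δ₁ δ₂ : X → ℝ)
    (h1 : ∀ x, 0 ≤ δ₁ x)
    (h2 : ∀ x, 0 ≤ δ₂ x) (h2s : ∑ x, δ₂ x = 1) :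
    (∃ w : X → X → ℝ,
        (∀ x y, 0 ≤ w x y ∧ w x y ≤ 1) ∧
        (∀ x y, 0 < w x y → R x y) ∧
        (∀ x, ∑ y, w x y = δ₁ x) ∧
        (∀ y, ∑ x, w x y = δ₂ y)) ↔
      (∀ x : X, ∑ y ∈ Finset.univ.filter (fun y => R x y), δ₁ y
        = ∑ y ∈ Finset.univ.filter (fun y => R x y), δ₂ y) := by
  constructor
  · rintro ⟨w, hw01, hwR, hw₁, hw₂⟩
    have hw : ∀ x y, w x y ≠ 0 → R x y := fun x y h => hwR x y ((hw01 x y).1.lt_of_ne' h)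
    exact sum_filter_rel_eq_of_support hR hw hw₁ hw₂
  · intro hclass
    have hδ₂_le_one : ∀ y, δ₂ y ≤ 1 := fun y =>
      h2s ▸ single_le_sum (fun z _ => h2 z) (mem_univ y)
    refine ⟨classCoupling R δ₁ δ₂, fun x y => ⟨classCoupling_nonneg h1 h2 x y, ?_⟩,
      fun x y h => rel_of_classCoupling_ne_zero h.ne', sum_classCoupling_right hR h1 hclass,
      sum_classCoupling_left hR h2 hclass⟩
    exact (classCoupling_le_right hR h1 h2 x y).trans (hδ₂_le_one y)

/-- for an equivalence relation on a finite set, a weighting function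
witnessing the lifting exists iff the two distributions agree on every equivalence class. -/
theorem lifting_iff_class_probabilities {X : Type*} [Fintype X]
    (R : X → X → Prop) [DecidableRel R] (hR : Equivalence R)
    (δ₁ δ₂ : X → ℝ)
    (h1 : ∀ x, 0 ≤ δ₁ x) (h1s : ∑ x, δ₁ x = 1)
    (h2 : ∀ x, 0 ≤ δ₂ x) (h2s : ∑ x, δ₂ x = 1) :
    (∃ w : X → X → ℝ,
        (∀ x y, 0 ≤ w x y ∧ w x y ≤ 1) ∧
        (∀ x y, 0 < w x y → R x y) ∧
        (∀ x, ∑ y, w x y = δ₁ x) ∧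
        (∀ y, ∑ x, w x y = δ₂ y)) ↔
      (∀ x : X, ∑ y ∈ Finset.univ.filter (fun y => R x y), δ₁ y
        = ∑ y ∈ Finset.univ.filter (fun y => R x y), δ₂ y) :=
  lifting_iff_class_probabilities_general R hR δ₁ δ₂ h1 h2 h2s
end

section
/- Lifting composes: for finite sets X, Y, Z, relations R ⊆ X × Y, S ⊆ Y × Z, and distributions δ₁ ∈ Disc(X), δ₂ ∈ Disc(Y), δ₃ ∈ Disc(Z), if δ₁ L(R) δ₂ and δ₂ L(S) δ₃ then δ₁ L(R∘S) δ₃, where R∘S = {(x,z) | ∃y. x R y ∧ y S z}. -/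
/-- lifting composes along composition of relations. -/
theorem lifting_compose {X Y Z : Type*} [Fintype X] [Fintype Y] [Fintype Z]
    (R : X → Y → Prop) (S : Y → Z → Prop)
    (δ₁ : X → ℝ) (δ₂ : Y → ℝ) (δ₃ : Z → ℝ)
    (h1 : ∀ x, 0 ≤ δ₁ x) (h1s : ∑ x, δ₁ x = 1)
    (h2 : ∀ y, 0 ≤ δ₂ y) (h2s : ∑ y, δ₂ y = 1)
    (h3 : ∀ z, 0 ≤ δ₃ z) (h3s : ∑ z, δ₃ z = 1)
    (hlift12 : ∃ w : X → Y → ℝ,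
        (∀ x y, 0 ≤ w x y ∧ w x y ≤ 1) ∧
        (∀ x y, 0 < w x y → R x y) ∧
        (∀ x, ∑ y, w x y = δ₁ x) ∧
        (∀ y, ∑ x, w x y = δ₂ y))
    (hlift23 : ∃ w : Y → Z → ℝ,
        (∀ y z, 0 ≤ w y z ∧ w y z ≤ 1) ∧
        (∀ y z, 0 < w y z → S y z) ∧
        (∀ y, ∑ z, w y z = δ₂ y) ∧
        (∀ z, ∑ y, w y z = δ₃ z)) :
    ∃ w : X → Z → ℝ,
      (∀ x z, 0 ≤ w x z ∧ w x z ≤ 1) ∧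
      (∀ x z, 0 < w x z → ∃ y, R x y ∧ S y z) ∧
      (∀ x, ∑ z, w x z = δ₁ x) ∧
      (∀ z, ∑ x, w x z = δ₃ z) := by
  obtain ⟨w1, hw1b, hw1R, hw1r, hw1c⟩ := hlift12
  obtain ⟨w2, hw2b, hw2S, hw2r, hw2c⟩ := hlift23
  -- if δ₂ y = 0 then w1 x y = 0 and w2 y z = 0
  have hw1z : ∀ x y, δ₂ y = 0 → w1 x y = 0 := by
    intro x y hy
    have := hw1c y
    have hnn : ∀ x ∈ Finset.univ, 0 ≤ w1 x y := fun x _ => (hw1b x y).1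
    have := (Finset.sum_eq_zero_iff_of_nonneg hnn).1 (by rw [this, hy])
    exact this x (Finset.mem_univ x)
  have hw2z : ∀ y z, δ₂ y = 0 → w2 y z = 0 := by
    intro y z hy
    have := hw2r y
    have hnn : ∀ z ∈ Finset.univ, 0 ≤ w2 y z := fun z _ => (hw2b y z).1
    have := (Finset.sum_eq_zero_iff_of_nonneg hnn).1 (by rw [this, hy])
    exact this z (Finset.mem_univ z)
  refine ⟨fun x z => ∑ y, w1 x y * w2 y z / δ₂ y, ?_, ?_, ?_, ?_⟩
  · intro x z
    constructor
    · exact Finset.sum_nonneg fun y _ =>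
        div_nonneg (mul_nonneg (hw1b x y).1 (hw2b y z).1) (h2 y)
    · have hle : ∀ y ∈ Finset.univ, w1 x y * w2 y z / δ₂ y ≤ w2 y z := by
        intro y _
        rcases eq_or_lt_of_le (h2 y) with hy | hy
        · simp [hw2z y z hy.symm]
        · rw [div_le_iff₀ hy]
          have hle1 : w1 x y ≤ δ₂ y := by
            rw [← hw1c y]
            exact Finset.single_le_sum (fun x _ => (hw1b x y).1) (Finset.mem_univ x)
          calc w1 x y * w2 y z ≤ δ₂ y * w2 y z :=
                mul_le_mul_of_nonneg_right hle1 (hw2b y z).1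
            _ = w2 y z * δ₂ y := mul_comm _ _
      calc ∑ y, w1 x y * w2 y z / δ₂ y ≤ ∑ y, w2 y z := Finset.sum_le_sum hle
        _ = δ₃ z := hw2c z
        _ ≤ 1 := by
            rw [← h3s]
            exact Finset.single_le_sum (fun z _ => h3 z) (Finset.mem_univ z)
  · intro x z hpos
    obtain ⟨y, _, hy⟩ := Finset.exists_lt_of_sum_lt (by simpa using hpos :
      ∑ _y : Y, (0:ℝ) < ∑ y, w1 x y * w2 y z / δ₂ y)
    have h1pos : 0 < w1 x y := by
      by_contra h
      push_neg at h
      have : w1 x y = 0 := le_antisymm h (hw1b x y).1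
      simp [this] at hy
    have h2pos : 0 < w2 y z := by
      by_contra h
      push_neg at h
      have : w2 y z = 0 := le_antisymm h (hw2b y z).1
      simp [this] at hy
    exact ⟨y, hw1R x y h1pos, hw2S y z h2pos⟩
  · intro x
    rw [Finset.sum_comm]
    have : ∀ y, ∑ z, w1 x y * w2 y z / δ₂ y = w1 x y := by
      intro y
      rcases eq_or_lt_of_le (h2 y) with hy | hy
      · rw [hw1z x y hy.symm]; simp
      · rw [← Finset.sum_div, ← Finset.mul_sum, hw2r y,
          mul_div_assoc, div_self (ne_of_gt hy), mul_one]
    rw [Finset.sum_congr rfl (fun y _ => this y), hw1r x]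
  · intro z
    rw [Finset.sum_comm]
    have : ∀ y, ∑ x, w1 x y * w2 y z / δ₂ y = w2 y z := by
      intro y
      rcases eq_or_lt_of_le (h2 y) with hy | hy
      · rw [hw2z y z hy.symm]; simp
      · have : ∀ x, w1 x y * w2 y z / δ₂ y = w1 x y * (w2 y z / δ₂ y) := by
          intro x; ring
        rw [Finset.sum_congr rfl (fun x _ => this x), ← Finset.sum_mul, hw1c y]
        field_simp
    rw [Finset.sum_congr rfl (fun y _ => this y), hw2c z]
end
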